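/- Termwise q-limit of ₂φ₁: for real α, β, γ (γ not a non-positive integer) and complex x with |x| < 1, lim_{q → 1⁻} ₂φ₁(q^α, q^β; q^γ; q, x) = ₂F₁(α, β; γ; x), where the limit is over real q ∈ (0,1). -/

import Mathlib

noncomputable def qPoch (a q : ℂ) (n : ℕ) : ℂ := ∏ j ∈ Finset.range n, (1 - a * q ^ j)

noncomputable def phi21 (a b c q x : ℂ) : ℂ :=
  ∑' n : ℕ, qPoch a q n * qPoch b q n / (qPoch q q n * qPoch c q n) * x ^ n

noncomputable def risingC (a : ℂ) (n : ℕ) : ℂ := ∏ j ∈ Finset.range n, (a + j)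

/-- Gauss hypergeometric series over ℂ. -/
noncomputable def F21 (a b c : ℂ) (x : ℂ) : ℂ :=
  ∑' n : ℕ, risingC a n * risingC b n / ((n.factorial : ℂ) * risingC c n) * x ^ n

/-!
Write the `n`-th coefficient of `₂φ₁(q^α, q^β; q^γ; q, x)` as
`∏_{j<n} (1 - q^(α+j)) / (1 - q^(1+j)) * ((1 - q^(β+j)) / (1 - q^(γ+j)))`.
Since `(1 - q^a) / (1 - q^b) → a / b` as `q → 1`, it tends to the `n`-th coefficient of `₂F₁`.
For `q ∈ [1/2, 1)` each ratio is bounded by `C(a, b) = ratioBound a b` with `C(a + j, b + j) → 1`, so the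
coefficients are dominated by `∏_{j<n} C_j`, and `∑ (∏_{j<n} C_j) r^n` converges for `‖x‖ < r < 1`
by the ratio test. Tannery's theorem then moves the limit inside the series.
-/

open Filter Set Finset Topology

namespace QLimit

lemma tendsto_one_sub_rpow_div_one_sub (s : ℝ) :
    Tendsto (fun q : ℝ => (1 - q ^ s) / (1 - q)) (𝓝[≠] 1) (𝓝 s) := by
  have hderiv : HasDerivAt (fun q : ℝ => q ^ s) s 1 := by
    simpa using Real.hasDerivAt_rpow_const (x := 1) (p := s) (Or.inl one_ne_zero)
  refine (hasDerivAt_iff_tendsto_slope.mp hderiv).congr fun q => ?_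
  rw [slope_def_field, Real.one_rpow, ← neg_div_neg_eq, neg_sub, neg_sub]

lemma tendsto_one_sub_rpow_div_one_sub_rpow (a : ℝ) {b : ℝ} (hb : b ≠ 0) :
    Tendsto (fun q : ℝ => (1 - q ^ a) / (1 - q ^ b)) (𝓝[≠] 1) (𝓝 (a / b)) := by
  have hlim := (tendsto_one_sub_rpow_div_one_sub a).div (tendsto_one_sub_rpow_div_one_sub b) hb
  refine hlim.congr' ?_
  filter_upwards [self_mem_nhdsWithin] with q hq
  exact div_div_div_cancel_right₀ (sub_ne_zero.mpr (Ne.symm hq)) _ _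

/-- For `b < a` this is Bernoulli's inequality with exponent `a / b`. -/
lemma one_sub_rpow_le_max_mul {q a b : ℝ} (hq0 : 0 < q) (hq1 : q < 1) (hb : 0 < b) :
    1 - q ^ a ≤ max 1 (a / b) * (1 - q ^ b) := by
  have hqb : 0 < q ^ b := Real.rpow_pos_of_pos hq0 b
  have hqb1 : q ^ b < 1 := Real.rpow_lt_one hq0.le hq1 hb
  rcases le_or_gt a b with hab | hab
  · have : q ^ b ≤ q ^ a := Real.rpow_le_rpow_of_exponent_ge hq0 hq1.le hab
    nlinarith [le_max_left 1 (a / b)]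
  · have hab' : 1 ≤ a / b := (one_le_div hb).mpr hab.le
    have hbern := one_add_mul_self_le_rpow_one_add (s := q ^ b - 1) (by linarith) hab'
    rw [add_sub_cancel, ← Real.rpow_mul hq0.le, mul_div_cancel₀ _ hb.ne'] at hbern
    nlinarith [le_max_right 1 (a / b)]

lemma one_sub_rpow_abs_le_abs {q s : ℝ} (hq0 : 0 < q) (hq1 : q < 1) :
    1 - q ^ |s| ≤ |1 - q ^ s| := by
  rcases le_or_gt 0 s with hs | hs
  · rw [abs_of_nonneg hs]
    exact le_abs_self _
  · have hinv : q ^ s * q ^ (-s) = 1 := by rw [← Real.rpow_add hq0]; simp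
    have hgt : 1 < q ^ s := (Real.one_lt_rpow_iff_of_pos hq0).mpr (Or.inr ⟨hq1, hs⟩)
    rw [abs_of_neg hs, abs_of_neg (by linarith)]
    nlinarith [Real.rpow_pos_of_pos hq0 (-s)]

/-- For `s < 0`, `q ^ s - 1 = q ^ s * (1 - q ^ (-s))` and `q ^ s ≤ 2 ^ (-s)`. -/
lemma abs_one_sub_rpow_le {q s : ℝ} (hq : 1 / 2 ≤ q) (hq1 : q < 1) :
    |1 - q ^ s| ≤ 2 ^ max 0 (-s) * (1 - q ^ |s|) := by
  have hq0 : 0 < q := by linarith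
  rcases le_or_gt 0 s with hs | hs
  · have : q ^ s ≤ 1 := Real.rpow_le_one hq0.le hq1.le hs
    rw [abs_of_nonneg hs, max_eq_left (by linarith), Real.rpow_zero, one_mul,
      abs_of_nonneg (by linarith)]
  · have hinv : q ^ s * q ^ (-s) = 1 := by rw [← Real.rpow_add hq0]; simp
    have hgt : 1 < q ^ s := (Real.one_lt_rpow_iff_of_pos hq0).mpr (Or.inr ⟨hq1, hs⟩)
    have hle : q ^ s ≤ 2 ^ (-s) := by
      calc q ^ s ≤ (1 / 2) ^ s := Real.rpow_le_rpow_of_nonpos (by norm_num) hq hs.le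
        _ = 2 ^ (-s) := by rw [one_div, Real.inv_rpow zero_le_two, Real.rpow_neg zero_le_two]
    have hpos : q ^ (-s) ≤ 1 := Real.rpow_le_one hq0.le hq1.le (by linarith)
    rw [abs_of_neg (by linarith), abs_of_neg hs, max_eq_right (by linarith)]
    nlinarith

noncomputable def ratioBound (a b : ℝ) : ℝ := 2 ^ max 0 (-a) * max 1 (|a| / |b|)

lemma one_le_ratioBound (a b : ℝ) : 1 ≤ ratioBound a b :=
  one_le_mul_of_one_le_of_one_le (Real.one_le_rpow one_le_two (le_max_left _ _)) (le_max_left _ _)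

lemma abs_one_sub_rpow_div_le {q a b : ℝ} (hq : 1 / 2 ≤ q) (hq1 : q < 1) (hb : b ≠ 0) :
    |(1 - q ^ a) / (1 - q ^ b)| ≤ ratioBound a b := by
  have hq0 : 0 < q := by linarith
  have hb' : 0 < |b| := abs_pos.mpr hb
  have hden : 0 < |1 - q ^ b| :=
    (sub_pos.mpr (Real.rpow_lt_one hq0.le hq1 hb')).trans_le (one_sub_rpow_abs_le_abs hq0 hq1)
  rw [abs_div, div_le_iff₀ hden]
  calc |1 - q ^ a| ≤ 2 ^ max 0 (-a) * (1 - q ^ |a|) := abs_one_sub_rpow_le hq hq1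
    _ ≤ 2 ^ max 0 (-a) * (max 1 (|a| / |b|) * (1 - q ^ |b|)) := by
      gcongr
      exact one_sub_rpow_le_max_mul hq0 hq1 hb'
    _ ≤ 2 ^ max 0 (-a) * (max 1 (|a| / |b|) * |1 - q ^ b|) := by
      gcongr
      exact one_sub_rpow_abs_le_abs hq0 hq1
    _ = ratioBound a b * |1 - q ^ b| := by rw [ratioBound, mul_assoc]

lemma tendsto_ratioBound_add_nat (a b : ℝ) :
    Tendsto (fun n : ℕ => ratioBound (a + n) (b + n)) atTop (𝓝 1) := by
  have hlim : Tendsto (fun n : ℕ => max 1 ((a + n) / (b + n))) atTop (𝓝 1) := by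
    simpa using (tendsto_const_nhds (x := (1 : ℝ))).max
      (tendsto_add_mul_div_add_mul_atTop_nhds a b 1 one_ne_zero)
  refine hlim.congr' ?_
  filter_upwards [tendsto_natCast_atTop_atTop.eventually_ge_atTop (max (-a) (-b))] with n hn
  have ha : 0 ≤ a + n := by linarith [le_max_left (-a) (-b)]
  have hb : 0 ≤ b + n := by linarith [le_max_right (-a) (-b)]
  rw [ratioBound, max_eq_left (neg_nonpos.mpr ha), Real.rpow_zero, one_mul, abs_of_nonneg ha,
    abs_of_nonneg hb]

lemma summable_prod_range_mul_pow {D : ℕ → ℝ} (hD0 : ∀ j, D j ≠ 0) (hD : Tendsto D atTop (𝓝 1))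
    {r : ℝ} (hr0 : r ≠ 0) (hr1 : |r| < 1) :
    Summable fun n => (∏ j ∈ range n, D j) * r ^ n := by
  have hne : ∀ n, (∏ j ∈ range n, D j) * r ^ n ≠ 0 := fun n =>
    mul_ne_zero (prod_ne_zero_iff.mpr fun j _ => hD0 j) (pow_ne_zero n hr0)
  refine summable_of_ratio_test_tendsto_lt_one hr1 (Eventually.of_forall hne) ?_
  have hlim : Tendsto (fun n => ‖D n‖ * |r|) atTop (𝓝 |r|) := by
    simpa using hD.norm.mul_const |r|
  refine hlim.congr fun n => ?_
  rw [prod_range_succ, pow_succ, eq_div_iff (norm_ne_zero_iff.mpr (hne n))]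
  simp only [norm_mul, norm_pow, Real.norm_eq_abs]
  ring

noncomputable def phiCoeff (α β γ q : ℝ) (n : ℕ) : ℝ :=
  ∏ j ∈ range n,
    (1 - q ^ (α + j)) / (1 - q ^ (1 + (j : ℝ))) * ((1 - q ^ (β + j)) / (1 - q ^ (γ + j)))

noncomputable def gaussCoeff (α β γ : ℝ) (n : ℕ) : ℝ :=
  ∏ j ∈ range n, (α + j) / (1 + (j : ℝ)) * ((β + j) / (γ + j))

lemma tendsto_phiCoeff {α β γ : ℝ} (hγ : ∀ j : ℕ, γ + j ≠ 0) (n : ℕ) :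
    Tendsto (phiCoeff α β γ · n) (𝓝[≠] 1) (𝓝 (gaussCoeff α β γ n)) :=
  tendsto_finsetProd _ fun j _ =>
    (tendsto_one_sub_rpow_div_one_sub_rpow _ (by positivity)).mul
      (tendsto_one_sub_rpow_div_one_sub_rpow _ (hγ j))

lemma abs_phiCoeff_le {α β γ q : ℝ} (hγ : ∀ j : ℕ, γ + j ≠ 0) (hq : 1 / 2 ≤ q) (hq1 : q < 1)
    (n : ℕ) :
    |phiCoeff α β γ q n| ≤
      ∏ j ∈ range n, ratioBound (α + j) (1 + j) * ratioBound (β + j) (γ + j) := by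
  rw [phiCoeff, abs_prod]
  gcongr with j
  rw [abs_mul]
  exact mul_le_mul (abs_one_sub_rpow_div_le hq hq1 (by positivity))
    (abs_one_sub_rpow_div_le hq hq1 (hγ j)) (abs_nonneg _)
    (zero_le_one.trans (one_le_ratioBound _ _))

lemma qPoch_ofReal_rpow {q : ℝ} (hq : 0 < q) (s : ℝ) (n : ℕ) :
    qPoch ((q ^ s : ℝ) : ℂ) q n = ((∏ j ∈ range n, (1 - q ^ (s + j)) : ℝ) : ℂ) := by
  simp [qPoch, Real.rpow_add hq, Real.rpow_natCast]

lemma qPoch_ofReal_self {q : ℝ} (hq : 0 < q) (n : ℕ) :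
    qPoch (q : ℂ) q n = ((∏ j ∈ range n, (1 - q ^ (1 + (j : ℝ))) : ℝ) : ℂ) := by
  simpa [add_comm] using qPoch_ofReal_rpow hq 1 n

lemma phi21_ofReal_rpow {q : ℝ} (hq : 0 < q) (α β γ : ℝ) (x : ℂ) :
    phi21 ((q ^ α : ℝ) : ℂ) ((q ^ β : ℝ) : ℂ) ((q ^ γ : ℝ) : ℂ) q x =
      ∑' n, (phiCoeff α β γ q n : ℂ) * x ^ n := by
  refine tsum_congr fun n => ?_
  rw [qPoch_ofReal_rpow hq, qPoch_ofReal_rpow hq, qPoch_ofReal_rpow hq, qPoch_ofReal_self hq,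
    phiCoeff, prod_mul_distrib, prod_div_distrib, prod_div_distrib]
  push_cast
  ring

lemma F21_ofReal (α β γ : ℝ) (x : ℂ) :
    F21 α β γ x = ∑' n, (gaussCoeff α β γ n : ℂ) * x ^ n := by
  refine tsum_congr fun n => ?_
  rw [← prod_range_add_one_eq_factorial, gaussCoeff, prod_mul_distrib, prod_div_distrib,
    prod_div_distrib]
  simp only [risingC]
  push_cast
  simp only [add_comm _ (1 : ℂ)]
  ring

end QLimit

open QLimit

/-- Termwise q → 1⁻ limit of ₂φ₁ towards ₂F₁. -/
theorem stmt_7 (α β γ : ℝ) (hγ : ∀ n : ℕ, γ ≠ -(n : ℝ)) (x : ℂ) (hx : ‖x‖ < 1) :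
    Filter.Tendsto
      (fun q : ℝ =>
        phi21 ((q ^ α : ℝ) : ℂ) ((q ^ β : ℝ) : ℂ) ((q ^ γ : ℝ) : ℂ) (q : ℂ) x)
      (nhdsWithin 1 (Set.Ioo (0 : ℝ) 1))
      (nhds (F21 (α : ℂ) (β : ℂ) (γ : ℂ) x)) := by
  have hγj : ∀ j : ℕ, γ + j ≠ 0 := fun j h => hγ j (eq_neg_of_add_eq_zero_left h)
  obtain ⟨r, hxr, hr1⟩ := exists_between hx
  have hr0 : 0 < r := (norm_nonneg x).trans_lt hxr
  have hphi : ∀ᶠ q in 𝓝[Ioo 0 1] (1 : ℝ), phi21 ((q ^ α : ℝ) : ℂ) ((q ^ β : ℝ) : ℂ)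
      ((q ^ γ : ℝ) : ℂ) q x = ∑' n, (phiCoeff α β γ q n : ℂ) * x ^ n :=
    eventually_mem_nhdsWithin.mono fun q hq => phi21_ofReal_rpow hq.1 α β γ x
  rw [tendsto_congr' hphi, F21_ofReal]
  have hD : ∀ j : ℕ, 1 ≤ ratioBound (α + j) (1 + j) * ratioBound (β + j) (γ + j) := fun j =>
    one_le_mul_of_one_le_of_one_le (one_le_ratioBound _ _) (one_le_ratioBound _ _)
  have hbound := summable_prod_range_mul_pow (fun j => (zero_lt_one.trans_le (hD j)).ne')
    (by simpa using (tendsto_ratioBound_add_nat α 1).mul (tendsto_ratioBound_add_nat β γ))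
    hr0.ne' (by rwa [abs_of_pos hr0])
  refine tendsto_tsum_of_dominated_convergence hbound (fun n => ?_) ?_
  · exact ((Complex.continuous_ofReal.tendsto _).comp ((tendsto_phiCoeff hγj n).mono_left
      (nhdsWithin_mono _ fun q hq => hq.2.ne))).mul_const _
  · filter_upwards [self_mem_nhdsWithin, nhdsWithin_le_nhds (Ici_mem_nhds one_half_lt_one)]
      with q hq hq2 n
    rw [norm_mul, norm_pow, Complex.norm_real, Real.norm_eq_abs]
    exact mul_le_mul (abs_phiCoeff_le hγj hq2 hq.2 n) (pow_le_pow_left₀ (norm_nonneg x) hxr.le n)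
      (by positivity) (prod_nonneg fun j _ => zero_le_one.trans (hD j))
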